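/- The softmax-weighted smooth maximum error bound implies asymptotic completeness for the maximum: given any ε > 0 and any nonincreasing a with a_1 > a_2 (strict gap), for all k ≥ (1/(a_1 - a_2)) · log(((a_1 - a_m)/ε)(m-1) - 1) (when this quantity is positive), we have a_1 - max~_k(a) ≤ ε. -/

import Mathlib

/-!
Writing `pᵢ` for the softmax weights, `a₀ - max~ₖ(a) = ∑ pᵢ (a₀ - aᵢ) ≤ (a₀ - a_{m-1}) (1 - p₀)`.
This already gives the claim when `a₀ - a_{m-1} ≤ ε`. Otherwise the threshold exceeds `1` when
`m ≥ 3`, so `k ≥ 0` and every `k aᵢ` with `i ≠ 0` is at most `k a₁`; for `m = 2` the only such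
`i` is `1`. Then `1 - p₀ ≤ (m-1) / (m-1 + e^{k (a₀ - a₁)})`, and the threshold on `k` is exactly
what makes `(a₀ - a_{m-1}) (m-1) / (m-1 + e^{k (a₀ - a₁)}) ≤ ε`.
-/

open Finset Real

noncomputable section

variable {ι : Type*} [Fintype ι]

def softmax (k : ℝ) (a : ι → ℝ) (i : ι) : ℝ :=
  exp (k * a i) / ∑ j, exp (k * a j)

def smoothMax (k : ℝ) (a : ι → ℝ) : ℝ :=
  (∑ i, a i * exp (k * a i)) / ∑ i, exp (k * a i)

variable (k : ℝ) (a : ι → ℝ)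

lemma sum_exp_mul_pos [Nonempty ι] : 0 < ∑ i, exp (k * a i) :=
  sum_pos (fun _ _ ↦ exp_pos _) univ_nonempty

lemma softmax_nonneg (i : ι) : 0 ≤ softmax k a i :=
  div_nonneg (exp_pos _).le (sum_nonneg fun _ _ ↦ (exp_pos _).le)

lemma softmax_le_one (i : ι) : softmax k a i ≤ 1 :=
  div_le_one_of_le₀
    (single_le_sum (f := fun j ↦ exp (k * a j)) (fun _ _ ↦ (exp_pos _).le) (mem_univ i))
    (sum_nonneg fun _ _ ↦ (exp_pos _).le)

lemma sum_softmax [Nonempty ι] : ∑ i, softmax k a i = 1 := by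
  simp only [softmax, ← sum_div, div_self (sum_exp_mul_pos k a).ne']

lemma smoothMax_eq_sum_softmax_mul : smoothMax k a = ∑ i, softmax k a i * a i := by
  simp only [smoothMax, softmax, sum_div]
  exact sum_congr rfl fun _ _ ↦ by ring

lemma one_sub_softmax_eq_sum_erase [DecidableEq ι] (i₀ : ι) :
    1 - softmax k a i₀ = ∑ i ∈ univ.erase i₀, softmax k a i := by
  have : Nonempty ι := ⟨i₀⟩
  rw [sum_erase_eq_sub (mem_univ i₀), sum_softmax]

lemma sub_smoothMax_le_mul_one_sub_softmax {L : ℝ} (hL : ∀ i, L ≤ a i) (i₀ : ι) :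
    a i₀ - smoothMax k a ≤ (a i₀ - L) * (1 - softmax k a i₀) := by
  classical
  have : Nonempty ι := ⟨i₀⟩
  calc a i₀ - smoothMax k a = ∑ i ∈ univ.erase i₀, softmax k a i * (a i₀ - a i) := by
        rw [sum_erase _ (by simp), smoothMax_eq_sum_softmax_mul]
        simp only [mul_sub, sum_sub_distrib, ← sum_mul, sum_softmax, one_mul]
    _ ≤ ∑ i ∈ univ.erase i₀, softmax k a i * (a i₀ - L) := by
        gcongr with i
        · exact softmax_nonneg k a i
        · exact hL i
    _ = (a i₀ - L) * (1 - softmax k a i₀) := by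
        rw [← sum_mul, one_sub_softmax_eq_sum_erase, mul_comm]

lemma one_sub_softmax_le {b : ℝ} (i₀ : ι) (hb : ∀ i ≠ i₀, k * a i ≤ k * b) :
    1 - softmax k a i₀ ≤
      (Fintype.card ι - 1) / (Fintype.card ι - 1 + exp (k * (a i₀ - b))) := by
  classical
  have : Nonempty ι := ⟨i₀⟩
  set n : ℝ := Fintype.card ι - 1
  set T := ∑ i ∈ univ.erase i₀, exp (k * a i)
  have hn : 0 ≤ n := sub_nonneg.2 (by exact_mod_cast Fintype.card_pos)
  have hT : T ≤ n * exp (k * b) := by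
    calc T ≤ (univ.erase i₀).card • exp (k * b) :=
          sum_le_card_nsmul _ _ _ fun i hi ↦ exp_le_exp.2 (hb i (ne_of_mem_erase hi))
      _ = n * exp (k * b) := by
          rw [nsmul_eq_mul, card_erase_of_mem (mem_univ _), card_univ,
            Nat.cast_sub Fintype.card_pos, Nat.cast_one]
  have hW : ∑ i, exp (k * a i) = exp (k * a i₀) + T := (add_sum_erase _ _ (mem_univ i₀)).symm
  have hsplit : exp (k * a i₀) = exp (k * (a i₀ - b)) * exp (k * b) := by
    rw [← exp_add]; ring_nf
  rw [one_sub_softmax_eq_sum_erase]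
  simp only [softmax, ← sum_div]
  rw [hW]
  have hE := exp_pos (k * (a i₀ - b))
  have hEb := exp_pos (k * b)
  have hT0 : 0 ≤ T := sum_nonneg fun _ _ ↦ (exp_pos _).le
  rw [div_le_div_iff₀ (by positivity) (by positivity), hsplit]
  nlinarith [mul_le_mul_of_nonneg_left hT (mul_pos hE hEb).le]

lemma mul_div_add_exp_le {D ε n x : ℝ} (hn : 1 ≤ n) (hε : 0 < ε)
    (hx : log (D / ε * n - 1) ≤ x) : D * n / (n + exp x) ≤ ε := by
  have hCx : D / ε * n - 1 ≤ exp x := (le_exp_log _).trans (exp_le_exp.2 hx)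
  rw [div_le_iff₀ (by positivity)]
  have : D * n = ε * (D / ε * n) := by field_simp
  nlinarith

end

lemma Antitone.mul_apply_le_mul_apply_one {m : ℕ} {a : Fin m → ℝ} (ha : Antitone a) {k : ℝ}
    (h1 : 1 < m) (hk : 0 ≤ k ∨ m = 2) {i : Fin m} (hi : i ≠ ⟨0, by omega⟩) :
    k * a i ≤ k * a ⟨1, h1⟩ := by
  have hi0 : (i : ℕ) ≠ 0 := fun h ↦ hi (Fin.ext h)
  rcases hk with hk | rfl
  · exact mul_le_mul_of_nonneg_left (ha (Fin.mk_le_mk.2 (by omega))) hk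
  · rw [show i = ⟨1, h1⟩ from Fin.ext (by have := i.isLt; simp only; omega)]

theorem softmax_asymptotic_completeness (m : ℕ) (hm : 2 ≤ m) (a : Fin m → ℝ)
    (ha : Antitone a) (hgap : a ⟨1, by omega⟩ < a ⟨0, by omega⟩) (ε : ℝ) (hε : 0 < ε)
    (k : ℝ)
    (hk : (1 / (a ⟨0, by omega⟩ - a ⟨1, by omega⟩)) *
      Real.log (((a ⟨0, by omega⟩ - a ⟨m - 1, by omega⟩) / ε) * (m - 1) - 1) ≤ k) :
    a ⟨0, by omega⟩ - (∑ i, a i * Real.exp (k * a i)) / (∑ i, Real.exp (k * a i)) ≤ ε := by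
  set i₀ : Fin m := ⟨0, by omega⟩
  set i₁ : Fin m := ⟨1, by omega⟩
  set L := a ⟨m - 1, by omega⟩
  set D := a i₀ - L
  have hL : ∀ i, L ≤ a i := fun i ↦ ha (Fin.mk_le_mk.2 (by omega))
  refine (sub_smoothMax_le_mul_one_sub_softmax k a hL i₀).trans ?_
  rcases le_or_gt D ε with hDε | hDε
  · nlinarith [softmax_nonneg k a i₀, softmax_le_one k a i₀, hL i₀]
  have hlog : log (D / ε * (m - 1) - 1) ≤ k * (a i₀ - a i₁) := by
    rwa [one_div_mul_eq_div, div_le_iff₀ (sub_pos.2 hgap)] at hk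
  have hm1 : (1 : ℝ) ≤ m - 1 := by
    rw [le_sub_iff_add_le]; exact_mod_cast hm
  have hk0 : 0 ≤ k ∨ m = 2 := by
    refine hm.eq_or_lt.symm.imp (fun hm3 ↦ ?_) Eq.symm
    have hm3' : (2 : ℝ) ≤ m - 1 := by
      rw [le_sub_iff_add_le]; exact_mod_cast hm3
    have hC : 1 < D / ε * (m - 1) - 1 := by nlinarith [(one_lt_div hε).2 hDε]
    nlinarith [log_pos hC, sub_pos.2 hgap]
  have htail := one_sub_softmax_le k a i₀ fun _ ↦ ha.mul_apply_le_mul_apply_one (by omega) hk0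
  rw [Fintype.card_fin] at htail
  calc D * (1 - softmax k a i₀)
      ≤ D * ((m - 1) / (m - 1 + exp (k * (a i₀ - a i₁)))) := by
        gcongr
        linarith [hL i₀]
    _ ≤ ε := by
        rw [← mul_div_assoc]
        exact mul_div_add_exp_le hm1 hε hlog
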